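/- arXiv:1108.4989 — 4 statements merged into one kernel-verified Lean document; each statement's English description precedes it below -/
import Mathlib

section
/- Let 0 ≠ m ∈ ℤ^d and let Γ ⊆ ℤ^d be a finite-index subgroup. Then |Ω_Γ ∩ H_m| ≤ (‖m‖_∞ / ⟨Γ⟩) · |Ω_Γ|, where H_m = {s ∈ 𝕊^d : s^m = 1}. -/
open scoped BigOperators ENNReal

noncomputable section

/-- `R_d = ℤ[ℤ^d]`, the ring of Laurent polynomials with integer coefficients
in `d` commuting variables. -/
abbrev LP (d : ℕ) := AddMonoidAlgebra ℤ (Fin d → ℤ)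

/-- Evaluation of a Laurent polynomial at a point `z ∈ ℂ^d` (with nonzero
coordinates understood): `f(z) = ∑ₙ fₙ z^n`. -/
noncomputable def lEval {d : ℕ} (f : LP d) (z : Fin d → ℂ) : ℂ :=
  Finsupp.sum f.coeff fun n c => (c : ℂ) * ∏ i, z i ^ (n i)

/-- The multiplicative `d`-torus `𝕊^d ⊆ ℂ^d`. -/
def torus (d : ℕ) : Set (Fin d → ℂ) := {z | ∀ i, ‖z i‖ = 1}

/-- The unitary variety `U(f) = {s ∈ 𝕊^d : f(s) = 0}`. -/
def uVar {d : ℕ} (f : LP d) : Set (Fin d → ℂ) := {z ∈ torus d | lEval f z = 0}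

/-- Atorality of an irreducible Laurent polynomial: there is `h ∉ (f)`
vanishing on all of `U(f)`. -/
def IsAtoralIrred {d : ℕ} (f : LP d) : Prop :=
  ∃ h : LP d, h ∉ Ideal.span ({f} : Set (LP d)) ∧ ∀ z ∈ uVar f, lEval h z = 0

/-- A general Laurent polynomial is atoral if every irreducible factor is atoral. -/
def IsAtoral {d : ℕ} (f : LP d) : Prop :=
  ∀ g : LP d, Irreducible g → g ∣ f → IsAtoralIrred g

/-- The sup norm `‖m‖_∞` of `m ∈ ℤ^d`. -/
def normInf {d : ℕ} (m : Fin d → ℤ) : ℕ := Finset.univ.sup fun i => (m i).natAbs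

/-- `⟨Γ⟩ = min {‖m‖_∞ : 0 ≠ m ∈ Γ}`. -/
noncomputable def gammaMin {d : ℕ} (Γ : AddSubgroup (Fin d → ℤ)) : ℕ :=
  sInf (normInf '' {m : Fin d → ℤ | m ∈ Γ ∧ m ≠ 0})

/-- The character power `ω^m = ω₁^{m₁} ⋯ ω_d^{m_d}`. -/
noncomputable def cPow {d : ℕ} (ω : Fin d → ℂ) (m : Fin d → ℤ) : ℂ := ∏ i, ω i ^ (m i)

/-- `Ω_Γ = {ω ∈ 𝕊^d : ω^m = 1 for all m ∈ Γ}`, the dual group of `ℤ^d/Γ`. -/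
def omegaGamma {d : ℕ} (Γ : AddSubgroup (Fin d → ℤ)) : Set (Fin d → ℂ) :=
  {ω ∈ torus d | ∀ m ∈ Γ, cPow ω m = 1}

/-- The logarithmic Mahler measure `m(f) = ∫_{[0,1]^d} log |f(e^{2πit})| dt`. -/
noncomputable def mahlerM {d : ℕ} (f : LP d) : ℝ :=
  ∫ t in Set.univ.pi (fun _ : Fin d => Set.Icc (0:ℝ) 1),
    Real.log ‖lEval f fun i => Complex.exp (2 * Real.pi * Complex.I * (t i))‖

/-- The Riemann sum `(1/|Ω_Γ|) ∑_{ω ∈ Ω_Γ, f(ω) ≠ 0} log |f(ω)|`. -/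
noncomputable def riemannSum {d : ℕ} (f : LP d) (Γ : AddSubgroup (Fin d → ℤ)) : ℝ :=
  (1 / ((omegaGamma Γ).ncard : ℝ)) *
    ∑ᶠ ω ∈ {ω ∈ omegaGamma Γ | lEval f ω ≠ 0}, Real.log ‖lEval f ω‖

/-- The Riemann sums of `log |f|` converge to the logarithmic Mahler measure `m(f)`. -/
def riemannConv {d : ℕ} (f : LP d) : Prop :=
  ∀ ε > (0:ℝ), ∃ L > (0:ℝ), ∀ Γ : AddSubgroup (Fin d → ℤ), Γ.FiniteIndex →
    (gammaMin Γ : ℝ) > L → |riemannSum f Γ - mahlerM f| < ε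

/-- The circle group `𝕋 = ℝ/ℤ`. -/
abbrev TT := AddCircle (1 : ℝ)

/-- `X_f = {x ∈ 𝕋^{ℤ^d} : ∑ₘ fₘ x_{n+m} = 0 for all n}`. -/
def Xf {d : ℕ} (f : LP d) : Set ((Fin d → ℤ) → TT) :=
  {x | ∀ n : Fin d → ℤ, (Finsupp.sum f.coeff fun m c => c • x (n + m)) = 0}

/-- The group `Fix_Γ(α_f)` of `Γ`-periodic points of `X_f`. -/
def fixSet {d : ℕ} (f : LP d) (Γ : AddSubgroup (Fin d → ℤ)) : Set ((Fin d → ℤ) → TT) :=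
  {x ∈ Xf f | ∀ n : Fin d → ℤ, ∀ m ∈ Γ, x (n + m) = x n}

/-- The group `Δ¹(X_f)` of summable homoclinic points of `α_f`. -/
def delta1 {d : ℕ} (f : LP d) : Set ((Fin d → ℤ) → TT) :=
  {x ∈ Xf f | Summable fun n => ‖x n‖}

/-- The adjoint `f*(u) = f(u⁻¹)`. -/
def adjLP {d : ℕ} (f : LP d) : LP d :=
  AddMonoidAlgebra.ofCoeff (Finsupp.equivMapDomain (Equiv.neg (Fin d → ℤ)) f.coeff)

/-- The shift `(α_f^m x)_n = x_{m+n}`. -/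
def shiftMap {d : ℕ} (m : Fin d → ℤ) (x : (Fin d → ℤ) → TT) : (Fin d → ℤ) → TT :=
  fun n => x (m + n)

/-- The ideal `n_f` of Laurent polynomials vanishing on `U(f)`. -/
def nSet {d : ℕ} (f : LP d) : Set (LP d) := {h | ∀ z ∈ uVar f, lEval h z = 0}

/-- The ideal `m_f` of `h` such that `h/f` has an absolutely convergent Fourier
series on `𝕊^d`. -/
def mSet {d : ℕ} (f : LP d) : Set (LP d) :=
  {h | ∃ w : (Fin d → ℤ) → ℂ, Summable (fun n => ‖w n‖) ∧
    ∀ z ∈ torus d, (∑' n, w n * cPow z n) * lEval f z = lEval h z}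

/-- The subgroup `H_m = {s ∈ 𝕊^d : s^m = 1}`. -/
def subH {d : ℕ} (m : Fin d → ℤ) : Set (Fin d → ℂ) := {s ∈ torus d | cPow s m = 1}

/-- `Ω`, the set of torsion points of `𝕊^d`. -/
def torsionPts (d : ℕ) : Set (Fin d → ℂ) :=
  {ω ∈ torus d | ∀ i, ∃ k : ℕ, 0 < k ∧ ω i ^ k = 1}

/-- `V_Γ(f)`, the space of bounded (indeed `Γ`-periodic) real points annihilated
by `f(σ̃)`. -/
def VGamma {d : ℕ} (f : LP d) (Γ : AddSubgroup (Fin d → ℤ)) : Set ((Fin d → ℤ) → ℝ) :=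
  {w | (∀ n : Fin d → ℤ, ∀ m ∈ Γ, w (n + m) = w n) ∧
    ∀ n : Fin d → ℤ, (Finsupp.sum f.coeff fun k c => (c : ℝ) * w (n + k)) = 0}

/-- The coordinatewise reduction `η : ℓ^∞(ℤ^d, ℝ) → 𝕋^{ℤ^d}`. -/
noncomputable def etaMap {d : ℕ} (w : (Fin d → ℤ) → ℝ) : (Fin d → ℤ) → TT :=
  fun n => (w n : TT)

/-- `Fix_Δ(σ)`, the set of points of `𝕋^{ℤ^d}` that are `Δ`-periodic for the full shift. -/
def fixSigma {d : ℕ} (Δ : Set (Fin d → ℤ)) : Set ((Fin d → ℤ) → TT) :=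
  {x | ∀ n : Fin d → ℤ, ∀ m ∈ Δ, x (n + m) = x n}

/-- The Euclidean distance on `ℂ^d ≅ ℝ^{2d}`. -/
noncomputable def euclid {d : ℕ} (x y : Fin d → ℂ) : ℝ :=
  Real.sqrt (∑ i, ‖x i - y i‖ ^ 2)

end

/-!
Write `A = ℤ^d ⧸ Γ`. Evaluating at the unit vectors identifies `Ω_Γ` with the character group
`Â`, and `Ω_Γ ∩ H_m` with the kernel of evaluation at the class `a` of `m`. If `r` is the order
of `a`, then `r • m` is a nonzero element of `Γ`, so `⟨Γ⟩ ≤ r ‖m‖_∞`. On the other hand the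
image of evaluation at `a` is a group of some order `N` with `N • a = 0`, since characters
separate the points of `A`; hence `r ≤ N` and `|Ω_Γ ∩ H_m| · r ≤ |Â| = |Ω_Γ|`.
-/

section

variable {d : ℕ}

lemma cPow_zero (ω : Fin d → ℂ) : cPow ω 0 = 1 := by
  simp [cPow]

lemma cPow_add {ω : Fin d → ℂ} (hω : ∀ i, ω i ≠ 0) (k l : Fin d → ℤ) :
    cPow ω (k + l) = cPow ω k * cPow ω l := by
  simp only [cPow, Pi.add_apply, zpow_add₀ (hω _), Finset.prod_mul_distrib]

lemma cPow_single (ω : Fin d → ℂ) (i : Fin d) (c : ℤ) : cPow ω (Pi.single i c) = ω i ^ c := by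
  rw [cPow, Finset.prod_eq_single i (fun j _ hj => by rw [Pi.single_eq_of_ne hj, zpow_zero])
    (by simp), Pi.single_eq_same]

lemma ne_zero_of_mem_torus {ω : Fin d → ℂ} (hω : ω ∈ torus d) (i : Fin d) : ω i ≠ 0 :=
  norm_ne_zero_iff.mp (by rw [hω i]; exact one_ne_zero)

noncomputable def cPowChar (ω : Fin d → ℂ) (hω : ∀ i, ω i ≠ 0) : AddChar (Fin d → ℤ) ℂ where
  toFun := cPow ω
  map_zero_eq_one' := cPow_zero ω
  map_add_eq_mul' := cPow_add hω

lemma cPow_apply_single (ψ : AddChar (Fin d → ℤ) ℂ) (k : Fin d → ℤ) :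
    cPow (fun i => ψ (Pi.single i 1)) k = ψ k := by
  have hk : k = ∑ i, k i • Pi.single i 1 := by
    simp_rw [← Pi.single_zsmul, smul_eq_mul, mul_one, Finset.univ_sum_single]
  have hψ := map_sum ψ.toAddMonoidHom (fun i => k i • Pi.single i (1 : ℤ)) Finset.univ
  rw [← hk] at hψ
  rw [cPow, show ψ k = Additive.toMul (ψ.toAddMonoidHom k) from rfl, hψ, toMul_sum]
  exact Finset.prod_congr rfl fun i _ => (ψ.map_zsmul_eq_zpow (k i) _).symm

section Duality

variable (Γ : AddSubgroup (Fin d → ℤ))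

lemma cPow_apply_single_mk (χ : AddChar ((Fin d → ℤ) ⧸ Γ) ℂ) (k : Fin d → ℤ) :
    cPow (fun i => χ (Pi.single i 1 : Fin d → ℤ)) k = χ k :=
  cPow_apply_single (χ.compAddMonoidHom (QuotientAddGroup.mk' Γ)) k

variable [Γ.FiniteIndex]

noncomputable def omegaGammaEquiv : omegaGamma Γ ≃ AddChar ((Fin d → ℤ) ⧸ Γ) ℂ where
  toFun ω := AddChar.toAddMonoidHomEquiv.symm <|
    QuotientAddGroup.lift Γ (cPowChar ω.1 (ne_zero_of_mem_torus ω.2.1)).toAddMonoidHom ω.2.2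
  invFun χ := ⟨fun i => χ (Pi.single i 1 : Fin d → ℤ), fun i => χ.norm_apply _, fun k hk => by
    simp [cPow_apply_single_mk, (QuotientAddGroup.eq_zero_iff k).mpr hk]⟩
  left_inv ω := Subtype.ext <| funext fun i => by
    simp [cPowChar, cPow_single]
  right_inv χ := DFunLike.ext _ _ fun q =>
    QuotientAddGroup.induction_on q (cPow_apply_single_mk Γ χ)

@[simp]
lemma omegaGammaEquiv_apply_mk (ω : omegaGamma Γ) (k : Fin d → ℤ) :
    omegaGammaEquiv Γ ω k = cPow ω k := by
  simp [omegaGammaEquiv, cPowChar]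

lemma ncard_omegaGamma : (omegaGamma Γ).ncard = Nat.card (AddChar ((Fin d → ℤ) ⧸ Γ) ℂ) :=
  (Nat.card_coe_set_eq _).symm.trans (Nat.card_congr (omegaGammaEquiv Γ))

lemma ncard_omegaGamma_inter_subH (m : Fin d → ℤ) :
    (omegaGamma Γ ∩ subH m).ncard =
      Nat.card {ψ : AddChar ((Fin d → ℤ) ⧸ Γ) ℂ // ψ m = 1} := by
  rw [← Nat.card_coe_set_eq]
  refine Nat.card_congr <| (Equiv.subtypeSubtypeEquivSubtypeInter _ _).symm.trans <|
    (omegaGammaEquiv Γ).subtypeEquiv fun ω => ?_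
  simp [subH, ω.2.1]

end Duality

lemma AddChar.card_eq_one_mul_addOrderOf_le {A : Type*} [AddCommGroup A] [Finite A] (a : A) :
    Nat.card {ψ : AddChar A ℂ // ψ a = 1} * addOrderOf a ≤ Nat.card (AddChar A ℂ) := by
  let ev : AddChar A ℂ →* ℂˣ := MonoidHom.toHomUnits
    { toFun := fun ψ => ψ a
      map_one' := AddChar.one_apply a
      map_mul' := fun ψ φ => AddChar.mul_apply ψ φ a }
  have hev : ∀ ψ, (ev ψ : ℂ) = ψ a := fun ψ => rfl
  have hN : 0 < Nat.card ev.range := Nat.card_pos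
  have hNa : Nat.card ev.range • a = 0 := AddChar.forall_apply_eq_zero.mp fun ψ => by
    have h1 : ev ψ ^ Nat.card ev.range = 1 := by
      simpa using congrArg Subtype.val (pow_card_eq_one' (x := (⟨ev ψ, ψ, rfl⟩ : ev.range)))
    rw [AddChar.map_nsmul_eq_pow, ← hev, ← Units.val_pow_eq_pow_val, h1, Units.val_one]
  have hker : Nat.card {ψ : AddChar A ℂ // ψ a = 1} = Nat.card ev.ker :=
    Nat.card_congr <| Equiv.subtypeEquivRight fun ψ => by rw [MonoidHom.mem_ker, Units.ext_iff]; rfl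
  calc Nat.card {ψ : AddChar A ℂ // ψ a = 1} * addOrderOf a
      ≤ Nat.card ev.ker * Nat.card ev.range :=
        Nat.mul_le_mul hker.le (Nat.le_of_dvd hN (addOrderOf_dvd_of_nsmul_eq_zero hNa))
    _ = Nat.card (AddChar A ℂ) := by rw [← Subgroup.index_ker, Subgroup.card_mul_index]

lemma normInf_nsmul_le (n : ℕ) (k : Fin d → ℤ) : normInf (n • k) ≤ n * normInf k :=
  Finset.sup_le fun i _ => by
    simpa [normInf, Int.natAbs_mul] using
      Nat.mul_le_mul_left n (Finset.le_sup (f := fun j => (k j).natAbs) (Finset.mem_univ i))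

lemma normInf_pos {k : Fin d → ℤ} (hk : k ≠ 0) : 0 < normInf k := by
  obtain ⟨i, hi⟩ := Function.ne_iff.mp hk
  exact (Int.natAbs_pos.mpr hi).trans_le
    (Finset.le_sup (f := fun j => (k j).natAbs) (Finset.mem_univ i))

lemma gammaMin_le_normInf {Γ : AddSubgroup (Fin d → ℤ)} {k : Fin d → ℤ} (hk : k ∈ Γ)
    (hk0 : k ≠ 0) : gammaMin Γ ≤ normInf k :=
  Nat.sInf_le ⟨k, ⟨hk, hk0⟩, rfl⟩

lemma gammaMin_pos {Γ : AddSubgroup (Fin d → ℤ)} (h : ∃ k ∈ Γ, k ≠ 0) : 0 < gammaMin Γ := by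
  obtain ⟨k, hk, hk0⟩ := h
  obtain ⟨l, ⟨-, hl0⟩, hl⟩ :=
    Nat.sInf_mem (s := normInf '' {k | k ∈ Γ ∧ k ≠ 0}) ⟨_, k, ⟨hk, hk0⟩, rfl⟩
  rw [gammaMin, ← hl]
  exact normInf_pos hl0

end

/-- `|Ω_Γ ∩ H_m| ≤ (‖m‖_∞ / ⟨Γ⟩) |Ω_Γ|`. -/
theorem slice_estimate {d : ℕ} (m : Fin d → ℤ) (hm : m ≠ 0)
    (Γ : AddSubgroup (Fin d → ℤ)) (hΓ : Γ.FiniteIndex) :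
    ((omegaGamma Γ ∩ subH m).ncard : ℝ) ≤
      ((normInf m : ℝ) / (gammaMin Γ : ℝ)) * ((omegaGamma Γ).ncard : ℝ) := by
  set r := addOrderOf (m : (Fin d → ℤ) ⧸ Γ)
  have hr : 0 < r := addOrderOf_pos _
  have hrm : r • m ∈ Γ := by
    rw [← QuotientAddGroup.eq_zero_iff, QuotientAddGroup.mk_nsmul]
    exact addOrderOf_nsmul_eq_zero _
  have hrm0 : r • m ≠ 0 := smul_ne_zero hr.ne' hm
  have hγ : gammaMin Γ ≤ r * normInf m :=
    (gammaMin_le_normInf hrm hrm0).trans (normInf_nsmul_le r m)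
  have hγ0 : (0 : ℝ) < gammaMin Γ := by exact_mod_cast gammaMin_pos ⟨_, hrm, hrm0⟩
  have hcount : (omegaGamma Γ ∩ subH m).ncard * r ≤ (omegaGamma Γ).ncard := by
    rw [ncard_omegaGamma_inter_subH, ncard_omegaGamma]
    exact AddChar.card_eq_one_mul_addOrderOf_le _
  rw [div_mul_eq_mul_div, le_div_iff₀ hγ0]
  calc ((omegaGamma Γ ∩ subH m).ncard : ℝ) * gammaMin Γ
      ≤ (omegaGamma Γ ∩ subH m).ncard * (r * normInf m) := by gcongr; exact_mod_cast hγ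
    _ = normInf m * ((omegaGamma Γ ∩ subH m).ncard * r) := by ring
    _ ≤ normInf m * (omegaGamma Γ).ncard := by gcongr; exact_mod_cast hcount
end

section
/- Let f ∈ R_d be nonzero and let m_1,…,m_L ∈ ℤ^d be nonzero elements such that U(f) ∩ Ω ⊆ H_{m_1} ∪ ⋯ ∪ H_{m_L}. Let Γ ⊆ ℤ^d be a finite-index subgroup and for 1 ≤ j ≤ L set Δ_{Γ,j} = {n ∈ ℤ^d : ω^n = 1 for every ω ∈ Ω_Γ ∩ H_{m_j}}, a finite-index subgroup of ℤ^d containing Γ. Then Fix°_Γ(α_f) ⊆ Fix_{Δ_{Γ,1}}(σ) + ⋯ + Fix_{Δ_{Γ,L}}(σ), where Fix_Δ(σ) = {x ∈ 𝕋^{ℤ^d} : x_{n+m} = x_n for all n ∈ ℤ^d, m ∈ Δ} and the sum is taken inside the group 𝕋^{ℤ^d}. -/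
open scoped BigOperators ENNReal

/-!
A `Γ`-periodic point of `X_f` close to `0` lifts to a real `Γ`-periodic solution `w` of
`f(σ) w = 0`, because the real sums `∑ₖ fₖ w_{n+k}` are integers of absolute value `< 1`.
Expanding `w` in the characters of `ℤ^d/Γ`, only characters `ω ∈ Ω_Γ` with `f(ω) = 0` occur;
each of them lies in some `H_{m_j}`, and grouping them by `j` writes `w` as a sum of
`Δ_{Γ,j}`-periodic terms. Hence the subgroup `∑ⱼ Fix_{Δ_{Γ,j}}(σ)` contains a neighbourhood of `0`
in the group `Fix_Γ(α_f)`, so it is open there, hence clopen, and contains the identity component.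
-/

open scoped Topology

section ConnectedComponent

variable {G : Type*} [TopologicalSpace G] [AddGroup G] [IsTopologicalAddGroup G]

theorem AddSubgroup.connectedComponentIn_zero_subset_of_mem_nhdsWithin (K H : AddSubgroup G)
    (hH : ∀ᶠ x in 𝓝[(K : Set G)] 0, x ∈ H) : connectedComponentIn (K : Set G) 0 ⊆ H := by
  set H' : AddSubgroup K := H.comap K.subtype
  have hopen : IsOpen (H' : Set K) := by
    refine H'.isOpen_of_mem_nhds (g := 0) ?_
    rw [mem_nhds_subtype_iff_nhdsWithin]
    exact Filter.mem_of_superset (Filter.inter_mem hH self_mem_nhdsWithin)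
      fun x ⟨hxH, hxK⟩ => ⟨⟨x, hxK⟩, hxH, rfl⟩
  rw [connectedComponentIn_eq_image K.zero_mem]
  rintro _ ⟨x, hx, rfl⟩
  exact IsClopen.connectedComponent_subset ⟨H'.isClosed_of_isOpen hopen, hopen⟩ H'.zero_mem hx

end ConnectedComponent

def AddSubgroup.sumOf {ι G : Type*} [Fintype ι] [AddCommGroup G] (S : ι → AddSubgroup G) :
    AddSubgroup G where
  carrier := {x | ∃ y : ι → G, (∀ j, y j ∈ S j) ∧ x = ∑ j, y j}
  zero_mem' := ⟨0, fun j => (S j).zero_mem, by simp⟩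
  add_mem' := by
    rintro _ _ ⟨y, hy, rfl⟩ ⟨z, hz, rfl⟩
    exact ⟨y + z, fun j => (S j).add_mem (hy j) (hz j), by simp [Finset.sum_add_distrib]⟩
  neg_mem' := by
    rintro _ ⟨y, hy, rfl⟩
    exact ⟨-y, fun j => (S j).neg_mem (hy j), by simp⟩

section Subgroups

variable {d : ℕ}

def xfSubgroup (f : LP d) : AddSubgroup ((Fin d → ℤ) → TT) where
  carrier := Xf f
  zero_mem' n := by simp [Finsupp.sum]
  add_mem' {x y} hx hy n := by
    have := congrArg₂ (· + ·) (hx n) (hy n)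
    simpa [Finsupp.sum, smul_add, Finset.sum_add_distrib] using this
  neg_mem' {x} hx n := by simpa [Finsupp.sum] using congrArg Neg.neg (hx n)

def fixSigmaSubgroup (Δ : Set (Fin d → ℤ)) : AddSubgroup ((Fin d → ℤ) → TT) where
  carrier := fixSigma Δ
  zero_mem' _ _ _ := rfl
  add_mem' hx hy n m hm := by simp [hx n m hm, hy n m hm]
  neg_mem' hx n m hm := by simp [hx n m hm]

theorem coe_xfSubgroup_inf_fixSigmaSubgroup (f : LP d) (Γ : AddSubgroup (Fin d → ℤ)) :
    ((xfSubgroup f ⊓ fixSigmaSubgroup Γ : AddSubgroup _) : Set ((Fin d → ℤ) → TT)) = fixSet f Γ :=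
  rfl

end Subgroups

theorem apply_eq_of_coe_eq {G α : Type*} [AddGroup G] {Γ : AddSubgroup G} {g : G → α}
    (hg : ∀ n, ∀ m ∈ Γ, g (n + m) = g n) {a b : G} (h : (a : G ⧸ Γ) = b) : g a = g b := by
  simpa using (hg a (-a + b) (QuotientAddGroup.eq.mp h)).symm

theorem AddCircle.eq_zero_of_abs_lt_of_coe_eq_zero {p r : ℝ} (hr : |r| < p)
    (h : (r : AddCircle p) = 0) : r = 0 := by
  obtain ⟨n, rfl⟩ := (AddCircle.coe_eq_zero_iff p).mp h
  have hp : 0 < p := (abs_nonneg _).trans_lt hr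
  rw [zsmul_eq_mul, abs_mul, abs_of_pos hp] at hr
  have hn : |(n : ℝ)| < 1 := by nlinarith
  rw [← Int.cast_abs, ← Int.cast_one, Int.cast_lt, Int.abs_lt_one_iff] at hn
  simp [hn]

theorem sum_coeff_mul_eq_zero_of_etaMap_mem_Xf {d : ℕ} (f : LP d) {w : (Fin d → ℤ) → ℝ} {δ : ℝ}
    (hw : ∀ n, |w n| ≤ δ) (hδ : δ * ∑ k ∈ f.coeff.support, |(f.coeff k : ℝ)| < 1)
    (hx : etaMap w ∈ Xf f) (n : Fin d → ℤ) :
    (Finsupp.sum f.coeff fun k c => (c : ℝ) * w (n + k)) = 0 := by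
  refine AddCircle.eq_zero_of_abs_lt_of_coe_eq_zero (p := 1) ?_ ?_
  · calc |Finsupp.sum f.coeff fun k c => (c : ℝ) * w (n + k)|
        ≤ ∑ k ∈ f.coeff.support, |(f.coeff k : ℝ)| * δ := by
          refine (Finset.abs_sum_le_sum_abs _ _).trans (Finset.sum_le_sum fun k _ => ?_)
          rw [abs_mul]
          exact mul_le_mul_of_nonneg_left (hw _) (abs_nonneg _)
      _ < 1 := by rwa [← Finset.sum_mul, mul_comm]
  · simpa [Finsupp.sum, QuotientAddGroup.mk_sum, etaMap] using hx n

theorem eventually_mem_etaMap_VGamma {d : ℕ} (f : LP d) (Γ : AddSubgroup (Fin d → ℤ))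
    [Finite ((Fin d → ℤ) ⧸ Γ)] : ∀ᶠ x in 𝓝[fixSet f Γ] 0, x ∈ etaMap '' VGamma f Γ := by
  set S := ∑ k ∈ f.coeff.support, |(f.coeff k : ℝ)|
  have hS : 0 ≤ S := Finset.sum_nonneg fun k _ => abs_nonneg _
  set δ := 1 / (S + 1)
  have hδ : 0 < δ := by positivity
  have hδS : δ * S < 1 := by
    rw [one_div_mul_eq_div, div_lt_one (by positivity)]
    linarith
  have hsmall : ∀ q : (Fin d → ℤ) ⧸ Γ,
      ∀ᶠ x in 𝓝 (0 : (Fin d → ℤ) → TT), x q.out ∈ ((↑) : ℝ → TT) '' Set.Ioo (-δ) δ := by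
    intro q
    refine (continuous_apply q.out).continuousAt.preimage_mem_nhds ?_
    exact (QuotientAddGroup.isOpenMap_coe _ isOpen_Ioo).mem_nhds
      ⟨0, ⟨by linarith, hδ⟩, by simp⟩
  filter_upwards [nhdsWithin_le_nhds (Filter.eventually_all.mpr hsmall), self_mem_nhdsWithin]
    with x hx hxΓ
  choose r hr hrx using hx
  have hxw : etaMap (fun n => r n) = x := by
    funext n
    exact (hrx n).trans (apply_eq_of_coe_eq hxΓ.2 (Quotient.out_eq' _))
  refine ⟨fun n => r n, ⟨fun n m hm => ?_, ?_⟩, hxw⟩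
  · simp [hm]
  · exact sum_coeff_mul_eq_zero_of_etaMap_mem_Xf f (fun n => (abs_lt.mpr (hr n)).le) hδS
      (hxw ▸ hxΓ.1)

theorem AddChar.map_sum_eq_prod {A M ι : Type*} [AddCommMonoid A] [CommMonoid M]
    (ψ : AddChar A M) (s : Finset ι) (a : ι → A) : ψ (∑ i ∈ s, a i) = ∏ i ∈ s, ψ (a i) :=
  map_prod ψ.toMonoidHom (fun i => Multiplicative.ofAdd (a i)) s

theorem AddChar.complexBasis_equivFun_comp_add_right {α : Type*} [AddCommGroup α] [Finite α]
    (u : α → ℂ) (a : α) (ψ : AddChar α ℂ) :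
    (complexBasis α).equivFun (fun q => u (q + a)) ψ = ψ a * (complexBasis α).equivFun u ψ := by
  have hu : (fun q => u (q + a)) =
      (complexBasis α).equivFun.symm fun φ => φ a * (complexBasis α).equivFun u φ := by
    funext q
    conv_lhs => rw [← (complexBasis α).sum_equivFun u]
    simp [Module.Basis.equivFun_symm_apply, Finset.sum_apply, AddChar.map_add_eq_mul, mul_comm,
      mul_left_comm, mul_assoc]
  rw [hu, LinearEquiv.apply_symm_apply]

section Characters

variable {d : ℕ} (Γ : AddSubgroup (Fin d → ℤ))

def charPoint (ψ : AddChar ((Fin d → ℤ) ⧸ Γ) ℂ) : Fin d → ℂ :=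
  fun i => ψ (Pi.single i 1 : Fin d → ℤ)

variable {Γ}

theorem cPow_charPoint (ψ : AddChar ((Fin d → ℤ) ⧸ Γ) ℂ) (k : Fin d → ℤ) :
    cPow (charPoint Γ ψ) k = ψ k := by
  conv_rhs => rw [← Finset.univ_sum_single k]
  rw [QuotientAddGroup.mk_sum, AddChar.map_sum_eq_prod]
  refine Finset.prod_congr rfl fun i _ => ?_
  rw [charPoint, ← AddChar.map_zsmul_eq_zpow, ← QuotientAddGroup.mk_zsmul, ← Pi.single_smul,
    smul_eq_mul, mul_one]

theorem lEval_charPoint (f : LP d) (ψ : AddChar ((Fin d → ℤ) ⧸ Γ) ℂ) :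
    lEval f (charPoint Γ ψ) = Finsupp.sum f.coeff fun k c => (c : ℂ) * ψ k := by
  simp only [lEval, ← cPow_charPoint]
  rfl

variable [Finite ((Fin d → ℤ) ⧸ Γ)] (ψ : AddChar ((Fin d → ℤ) ⧸ Γ) ℂ)

theorem charPoint_mem_torus : charPoint Γ ψ ∈ torus d := fun _ => AddChar.norm_apply ψ _

theorem charPoint_mem_torsionPts : charPoint Γ ψ ∈ torsionPts d :=
  ⟨charPoint_mem_torus ψ, fun _ => ⟨Nat.card ((Fin d → ℤ) ⧸ Γ), Nat.card_pos,
    by rw [charPoint, ← AddChar.map_nsmul_eq_pow, card_nsmul_eq_zero', AddChar.map_zero_eq_one]⟩⟩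

theorem charPoint_mem_omegaGamma : charPoint Γ ψ ∈ omegaGamma Γ :=
  ⟨charPoint_mem_torus ψ, fun k hk => by
    rw [cPow_charPoint, (QuotientAddGroup.eq_zero_iff k).mpr hk, AddChar.map_zero_eq_one]⟩

end Characters

/-- Translation by `k` multiplies the `ψ`-coefficient by `ψ k`, so `f(σ)` multiplies it by
`f(charPoint ψ)`. -/
theorem equivFun_mul_lEval_charPoint_eq_zero {d : ℕ} (f : LP d) {Γ : AddSubgroup (Fin d → ℤ)}
    [Finite ((Fin d → ℤ) ⧸ Γ)] (u : (Fin d → ℤ) ⧸ Γ → ℂ)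
    (hu : ∀ q, (Finsupp.sum f.coeff fun k c => (c : ℂ) * u (q + k)) = 0)
    (ψ : AddChar ((Fin d → ℤ) ⧸ Γ) ℂ) :
    (AddChar.complexBasis _).equivFun u ψ * lEval f (charPoint Γ ψ) = 0 := by
  have h0 : ∑ k ∈ f.coeff.support, (f.coeff k : ℂ) • (fun q => u (q + k)) = 0 := by
    funext q
    simpa [Finset.sum_apply, Finsupp.sum] using hu q
  have := congrArg (fun v => (AddChar.complexBasis _).equivFun v ψ) h0
  simp only [map_sum, map_smul, Finset.sum_apply, Pi.smul_apply,
    AddChar.complexBasis_equivFun_comp_add_right, map_zero, Pi.zero_apply] at this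
  rw [lEval_charPoint, Finsupp.sum, Finset.mul_sum, ← this]
  exact Finset.sum_congr rfl fun k _ => by simp only [smul_eq_mul]; ring

theorem Fintype.exists_sum_sum_eq_sum {ι κ M : Type*} [Fintype ι] [Fintype κ] [AddCommMonoid M]
    {P : ι → κ → Prop} (F : ι → M) (hF : ∀ i, F i ≠ 0 → ∃ j, P i j) :
    ∃ t : κ → Finset ι, (∀ j, ∀ i ∈ t j, P i j) ∧ ∑ j, ∑ i ∈ t j, F i = ∑ i, F i := by
  classical
  have : ∀ i, ∃ o : Option κ, (o = none → F i = 0) ∧ ∀ j, o = some j → P i j := by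
    intro i
    by_cases hi : F i = 0
    · exact ⟨none, fun _ => hi, by simp⟩
    · obtain ⟨j, hj⟩ := hF i hi
      exact ⟨some j, by simp, fun j' hj' => Option.some_inj.mp hj' ▸ hj⟩
  choose g hnone hsome using this
  refine ⟨fun j => {i | g i = some j}, fun j i hi => hsome i j (Finset.mem_filter.mp hi).2, ?_⟩
  rw [← Finset.sum_fiberwise Finset.univ g F, Fintype.sum_option,
    Finset.sum_eq_zero fun i hi => hnone i (Finset.mem_filter.mp hi).2, zero_add]

theorem etaMap_mem_sumOf_of_mem_VGamma {d L : ℕ} (f : LP d) (m : Fin L → (Fin d → ℤ))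
    (hcover : uVar f ∩ torsionPts d ⊆ ⋃ j, subH (m j)) {Γ : AddSubgroup (Fin d → ℤ)}
    [Finite ((Fin d → ℤ) ⧸ Γ)] {w : (Fin d → ℤ) → ℝ} (hw : w ∈ VGamma f Γ) :
    etaMap w ∈ AddSubgroup.sumOf fun j =>
      fixSigmaSubgroup {n | ∀ ω ∈ omegaGamma Γ ∩ subH (m j), cPow ω n = 1} := by
  set u : (Fin d → ℤ) ⧸ Γ → ℂ := fun q => (w q.out : ℂ)
  have hu : ∀ n : Fin d → ℤ, u n = w n :=
    fun n => congrArg ((↑) : ℝ → ℂ) (apply_eq_of_coe_eq hw.1 (Quotient.out_eq' _))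
  set c := (AddChar.complexBasis ((Fin d → ℤ) ⧸ Γ)).equivFun u
  have hexp : ∀ n : Fin d → ℤ, ∑ ψ, c ψ * ψ n = w n := by
    intro n
    have := congrFun ((AddChar.complexBasis _).sum_equivFun u) n
    simp only [Finset.sum_apply, Pi.smul_apply, AddChar.complexBasis_apply, smul_eq_mul] at this
    rw [this, hu]
  have hsupp : ∀ ψ, c ψ ≠ 0 → ∃ j, charPoint Γ ψ ∈ subH (m j) := by
    intro ψ hψ
    have hann : c ψ * lEval f (charPoint Γ ψ) = 0 := by
      refine equivFun_mul_lEval_charPoint_eq_zero f u (fun q => ?_) ψ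
      obtain ⟨n, rfl⟩ := QuotientAddGroup.mk_surjective q
      simpa [Finsupp.sum, ← QuotientAddGroup.mk_add, hu] using congrArg ((↑) : ℝ → ℂ) (hw.2 n)
    exact Set.mem_iUnion.mp (hcover ⟨⟨charPoint_mem_torus ψ,
      (mul_eq_zero.mp hann).resolve_left hψ⟩, charPoint_mem_torsionPts ψ⟩)
  obtain ⟨t, ht, hsum⟩ := Fintype.exists_sum_sum_eq_sum (P := fun ψ j => charPoint Γ ψ ∈ subH (m j))
    (fun ψ (n : Fin d → ℤ) => c ψ * ψ n) fun ψ hψ => hsupp ψ fun hc => hψ (by ext; simp [hc])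
  refine ⟨fun j n => ((∑ ψ ∈ t j, c ψ * ψ n).re : TT), fun j n p hp => ?_, funext fun n => ?_⟩
  · refine congrArg (fun z : ℂ => (z.re : TT)) (Finset.sum_congr rfl fun ψ hψ => ?_)
    rw [QuotientAddGroup.mk_add, AddChar.map_add_eq_mul, ← cPow_charPoint ψ p,
      hp _ ⟨charPoint_mem_omegaGamma ψ, ht j ψ hψ⟩, mul_one]
  · have := congrFun hsum n
    simp only [Finset.sum_apply, hexp] at this
    simp [etaMap, ← QuotientAddGroup.mk_sum, ← Complex.re_sum, this]

theorem fix_component_capture_general {d L : ℕ} (f : LP d)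
    (m : Fin L → (Fin d → ℤ))
    (hcover : uVar f ∩ torsionPts d ⊆ ⋃ j, subH (m j))
    (Γ : AddSubgroup (Fin d → ℤ)) (hΓ : Γ.FiniteIndex) :
    connectedComponentIn (fixSet f Γ) 0 ⊆
      {x | ∃ y : Fin L → ((Fin d → ℤ) → TT),
        (∀ j, y j ∈ fixSigma {n : Fin d → ℤ | ∀ ω ∈ omegaGamma Γ ∩ subH (m j), cPow ω n = 1}) ∧
        x = ∑ j, y j} := by
  have : Finite ((Fin d → ℤ) ⧸ Γ) := Nat.finite_of_card_ne_zero hΓ.index_ne_zero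
  have hnhds := (eventually_mem_etaMap_VGamma f Γ).mono fun _ ⟨_, hw, hx⟩ =>
    hx ▸ etaMap_mem_sumOf_of_mem_VGamma f m hcover hw
  rw [← coe_xfSubgroup_inf_fixSigmaSubgroup] at hnhds ⊢
  exact AddSubgroup.connectedComponentIn_zero_subset_of_mem_nhdsWithin _ _ hnhds

/-- If `U(f) ∩ Ω ⊆ H_{m_1} ∪ ⋯ ∪ H_{m_L}`, then
`Fix°_Γ(α_f) ⊆ Fix_{Δ_{Γ,1}}(σ) + ⋯ + Fix_{Δ_{Γ,L}}(σ)`. -/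
theorem fix_component_capture {d L : ℕ} (f : LP d) (hf : f ≠ 0)
    (m : Fin L → (Fin d → ℤ)) (hm : ∀ j, m j ≠ 0)
    (hcover : uVar f ∩ torsionPts d ⊆ ⋃ j, subH (m j))
    (Γ : AddSubgroup (Fin d → ℤ)) (hΓ : Γ.FiniteIndex) :
    connectedComponentIn (fixSet f Γ) 0 ⊆
      {x | ∃ y : Fin L → ((Fin d → ℤ) → TT),
        (∀ j, y j ∈ fixSigma {n : Fin d → ℤ | ∀ ω ∈ omegaGamma Γ ∩ subH (m j), cPow ω n = 1}) ∧
        x = ∑ j, y j} :=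
  fix_component_capture_general f m hcover Γ hΓ
end

section
/- Let d ≥ 1 and let f ∈ R_d be a nonzero irreducible Laurent polynomial. For every ε > 0 and every function ψ: ℕ → ℕ with ψ(n) → ∞ as n → ∞ (no matter how slowly), there exists L ≥ 1 such that for every finite-index subgroup Γ ⊆ ℤ^d with ⟨Γ⟩ > L and every ω ∈ Ω_Γ with f(ω) ≠ 0, the Euclidean distance in ℂ^d from ω to U(f) satisfies dist(ω, U(f)) ≥ e^{−ε ψ(⟨Γ⟩)|Ω_Γ|} (the distance to the empty set being +∞). -/
open scoped BigOperators ENNReal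

/-!
The coordinates of `ω ∈ Ω_Γ` are roots of unity, so `f(ω)` is a nonzero algebraic integer of
`K = ℚ(ω₁, …, ω_d)` and its norm is a nonzero integer. Every conjugate `σ f(ω) = f(σ ω)` is a value
of `f` at another point of `Ω_Γ`, hence at most `‖f‖₁`, and `K` has at most `|Ω_Γ|` embeddings
into `ℂ`; this gives the Liouville inequality `|f(ω)| ≥ ‖f‖₁^{-(|Ω_Γ| - 1)}`. Since `f` is
Lipschitz on `𝕊^d` and vanishes on `U(f)`, `dist(ω, U(f)) ≥ M^{-|Ω_Γ|}` for a constant `M`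
depending only on `f`, and this beats `e^{-ε ψ(⟨Γ⟩) |Ω_Γ|}` as soon as `ψ(⟨Γ⟩) ≥ log M / ε`.
-/

section UnitNorm

variable {𝕜 : Type*} [NormedDivisionRing 𝕜] {a b : 𝕜}

theorem norm_pow_sub_pow_le_of_norm_eq_one (ha : ‖a‖ = 1) (hb : ‖b‖ = 1) (k : ℕ) :
    ‖a ^ k - b ^ k‖ ≤ k * ‖a - b‖ := by
  induction k with
  | zero => simp
  | succ k ih =>
    calc ‖a ^ (k + 1) - b ^ (k + 1)‖ = ‖a ^ k * (a - b) + (a ^ k - b ^ k) * b‖ := by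
          congr 1; noncomm_ring
      _ ≤ ‖a - b‖ + ‖a ^ k - b ^ k‖ := by
          refine (norm_add_le _ _).trans_eq ?_
          simp [norm_pow, ha, hb]
      _ ≤ (k + 1 : ℕ) * ‖a - b‖ := by push_cast; linarith

theorem norm_inv_sub_inv_of_norm_eq_one (ha : ‖a‖ = 1) (hb : ‖b‖ = 1) :
    ‖a⁻¹ - b⁻¹‖ = ‖a - b‖ := by
  have ha0 : a ≠ 0 := norm_ne_zero_iff.mp (by simp [ha])
  have hb0 : b ≠ 0 := norm_ne_zero_iff.mp (by simp [hb])
  rw [inv_sub_inv' ha0 hb0, norm_mul, norm_mul, norm_inv, norm_inv, ha, hb, norm_sub_rev]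
  simp

theorem norm_zpow_sub_zpow_le_of_norm_eq_one (ha : ‖a‖ = 1) (hb : ‖b‖ = 1) (k : ℤ) :
    ‖a ^ k - b ^ k‖ ≤ |(k : ℝ)| * ‖a - b‖ := by
  obtain ⟨n, rfl | rfl⟩ := Int.eq_nat_or_neg k
  · simpa using norm_pow_sub_pow_le_of_norm_eq_one ha hb n
  · have hinv := norm_pow_sub_pow_le_of_norm_eq_one (a := a⁻¹) (b := b⁻¹)
      (by simp [ha]) (by simp [hb]) n
    rw [norm_inv_sub_inv_of_norm_eq_one ha hb] at hinv
    simpa [zpow_neg, inv_pow] using hinv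

end UnitNorm

theorem norm_prod_sub_prod_le_of_norm_le_one {ι 𝕜 : Type*} [NormedField 𝕜] (s : Finset ι)
    {a b : ι → 𝕜} (ha : ∀ i ∈ s, ‖a i‖ ≤ 1) (hb : ∀ i ∈ s, ‖b i‖ ≤ 1) :
    ‖∏ i ∈ s, a i - ∏ i ∈ s, b i‖ ≤ ∑ i ∈ s, ‖a i - b i‖ := by
  classical
  induction s using Finset.induction with
  | empty => simp
  | insert x s hx ih =>
    simp only [Finset.mem_insert, forall_eq_or_imp] at ha hb
    have hprod : ‖∏ i ∈ s, a i‖ ≤ 1 := by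
      rw [norm_prod]; exact Finset.prod_le_one (fun i _ => norm_nonneg (a i)) ha.2
    rw [Finset.prod_insert hx, Finset.prod_insert hx, Finset.sum_insert hx]
    calc ‖a x * ∏ i ∈ s, a i - b x * ∏ i ∈ s, b i‖
        = ‖(a x - b x) * ∏ i ∈ s, a i + b x * (∏ i ∈ s, a i - ∏ i ∈ s, b i)‖ := by
          congr 1; ring
      _ ≤ ‖a x - b x‖ * ‖∏ i ∈ s, a i‖ + ‖b x‖ * ‖∏ i ∈ s, a i - ∏ i ∈ s, b i‖ := by
          exact (norm_add_le _ _).trans_eq (by rw [norm_mul, norm_mul])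
      _ ≤ ‖a x - b x‖ * 1 + 1 * ∑ i ∈ s, ‖a i - b i‖ := by
          gcongr
          · exact hb.1
          · exact ih ha.2 hb.2
      _ = _ := by ring

def l1Norm {d : ℕ} (f : LP d) : ℝ := ∑ n ∈ f.coeff.support, |(f.coeff n : ℝ)|

def lipConst {d : ℕ} (f : LP d) : ℝ :=
  ∑ n ∈ f.coeff.support, |(f.coeff n : ℝ)| * ∑ i, |(n i : ℝ)|

section Torus

variable {d : ℕ}

theorem l1Norm_nonneg (f : LP d) : 0 ≤ l1Norm f :=
  Finset.sum_nonneg fun _ _ => abs_nonneg _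

theorem lipConst_nonneg (f : LP d) : 0 ≤ lipConst f :=
  Finset.sum_nonneg fun _ _ =>
    mul_nonneg (abs_nonneg _) (Finset.sum_nonneg fun _ _ => abs_nonneg _)

theorem lEval_eq_sum (f : LP d) (z : Fin d → ℂ) :
    lEval f z = ∑ n ∈ f.coeff.support, (f.coeff n : ℂ) * cPow z n := rfl

theorem norm_sub_le_euclid (x y : Fin d → ℂ) (i : Fin d) : ‖x i - y i‖ ≤ euclid x y :=
  Real.le_sqrt_of_sq_le <|
    Finset.single_le_sum (f := fun j => ‖x j - y j‖ ^ 2) (fun _ _ => sq_nonneg _)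
      (Finset.mem_univ i)

theorem norm_cPow_of_mem_torus {z : Fin d → ℂ} (hz : z ∈ torus d) (n : Fin d → ℤ) :
    ‖cPow z n‖ = 1 := by
  simp [cPow, norm_prod, norm_zpow, hz _]

theorem norm_cPow_sub_cPow_le {z w : Fin d → ℂ} (hz : z ∈ torus d) (hw : w ∈ torus d)
    (n : Fin d → ℤ) : ‖cPow z n - cPow w n‖ ≤ (∑ i, |(n i : ℝ)|) * euclid z w := by
  calc ‖cPow z n - cPow w n‖ ≤ ∑ i, ‖z i ^ n i - w i ^ n i‖ :=
        norm_prod_sub_prod_le_of_norm_le_one _ (by simp [norm_zpow, hz _])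
          (by simp [norm_zpow, hw _])
    _ ≤ ∑ i, |(n i : ℝ)| * euclid z w := by
        gcongr with i
        exact (norm_zpow_sub_zpow_le_of_norm_eq_one (hz i) (hw i) _).trans
          (by gcongr; exact norm_sub_le_euclid z w i)
    _ = (∑ i, |(n i : ℝ)|) * euclid z w := (Finset.sum_mul ..).symm

theorem norm_lEval_sub_lEval_le (f : LP d) {z w : Fin d → ℂ} (hz : z ∈ torus d)
    (hw : w ∈ torus d) : ‖lEval f z - lEval f w‖ ≤ lipConst f * euclid z w := by
  rw [lEval_eq_sum, lEval_eq_sum, ← Finset.sum_sub_distrib, lipConst, Finset.sum_mul]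
  refine (norm_sum_le _ _).trans (Finset.sum_le_sum fun n _ => ?_)
  rw [← mul_sub, norm_mul, Complex.norm_intCast, mul_assoc]
  gcongr
  exact norm_cPow_sub_cPow_le hz hw n

theorem norm_lEval_le_l1Norm (f : LP d) {z : Fin d → ℂ} (hz : z ∈ torus d) :
    ‖lEval f z‖ ≤ l1Norm f := by
  rw [lEval_eq_sum, l1Norm]
  refine (norm_sum_le _ _).trans_eq (Finset.sum_congr rfl fun n _ => ?_)
  rw [norm_mul, norm_cPow_of_mem_torus hz, mul_one, Complex.norm_intCast]

theorem one_le_l1Norm {f : LP d} (hf : f ≠ 0) : 1 ≤ l1Norm f := by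
  obtain ⟨n, hn⟩ := Finsupp.support_nonempty_iff.mpr (mt AddMonoidAlgebra.coeff_eq_zero.mp hf)
  calc (1 : ℝ) ≤ |(f.coeff n : ℝ)| := by
        exact_mod_cast Int.one_le_abs (Finsupp.mem_support_iff.mp hn)
    _ ≤ l1Norm f := Finset.single_le_sum (f := fun n => |(f.coeff n : ℝ)|)
        (fun _ _ => abs_nonneg _) hn

end Torus

theorem one_le_prod_norm_algHom_of_isIntegral {K : Type*} [Field K] [Algebra ℚ K]
    [FiniteDimensional ℚ K] {x : K} (hx : IsIntegral ℤ x) (hx0 : x ≠ 0) :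
    1 ≤ ∏ σ : K →ₐ[ℚ] ℂ, ‖σ x‖ := by
  obtain ⟨z, hz⟩ := IsIntegrallyClosed.isIntegral_iff.mp (Algebra.isIntegral_norm ℚ hx)
  have hz0 : z ≠ 0 := by
    rintro rfl
    exact hx0 (by simpa using hz.symm)
  calc (1 : ℝ) ≤ |(z : ℝ)| := by exact_mod_cast Int.one_le_abs hz0
    _ = ‖algebraMap ℚ ℂ (Algebra.norm ℚ x)‖ := by
        rw [← hz]; simp
    _ = ∏ σ : K →ₐ[ℚ] ℂ, ‖σ x‖ := by rw [Algebra.norm_eq_prod_embeddings, norm_prod]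

theorem one_le_norm_mul_pow_of_norm_algHom_le {K : Type*} [Field K] [Algebra ℚ K]
    [FiniteDimensional ℚ K] {x : K} (hx : IsIntegral ℤ x) (hx0 : x ≠ 0) (ι : K →ₐ[ℚ] ℂ)
    {B : ℝ} (hB1 : 1 ≤ B) (hB : ∀ σ : K →ₐ[ℚ] ℂ, ‖σ x‖ ≤ B) {N : ℕ}
    (hN : Fintype.card (K →ₐ[ℚ] ℂ) ≤ N) : 1 ≤ ‖ι x‖ * B ^ (N - 1) := by
  classical
  calc (1 : ℝ) ≤ ∏ σ : K →ₐ[ℚ] ℂ, ‖σ x‖ := one_le_prod_norm_algHom_of_isIntegral hx hx0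
    _ = ‖ι x‖ * ∏ σ ∈ Finset.univ.erase ι, ‖σ x‖ := (Finset.mul_prod_erase _ _ (by simp)).symm
    _ ≤ ‖ι x‖ * B ^ (Fintype.card (K →ₐ[ℚ] ℂ) - 1) := by
        gcongr
        refine (Finset.prod_le_prod (fun σ _ => norm_nonneg (σ x)) fun σ _ => hB σ).trans_eq ?_
        rw [Finset.prod_const, Finset.card_erase_of_mem (Finset.mem_univ _), Finset.card_univ]
    _ ≤ ‖ι x‖ * B ^ (N - 1) := by gcongr

-- Over `ℂ` this is `lEval` itself, so `map_laurentEval` computes `lEval` at conjugate points.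
def laurentEval {d : ℕ} {K : Type*} [Field K] (f : LP d) (w : Fin d → K) : K :=
  Finsupp.sum f.coeff fun n c => (c : K) * ∏ i, w i ^ n i

section Laurent

variable {d : ℕ} {K L : Type*} [Field K] [Field L]

theorem map_laurentEval (φ : K →+* L) (f : LP d) (w : Fin d → K) :
    φ (laurentEval f w) = laurentEval f fun i => φ (w i) := by
  simp [laurentEval, Finsupp.sum, map_sum, map_prod, map_zpow₀]

theorem isIntegral_laurentEval (f : LP d) {w : Fin d → K} {k : ℕ} (hk : k ≠ 0)
    (hw : ∀ i, w i ^ k = 1) : IsIntegral ℤ (laurentEval f w) := by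
  refine IsIntegral.sum _ fun n _ => (isIntegral_algebraMap.mul ?_)
  refine IsIntegral.prod _ fun i _ => IsIntegral.of_pow (Nat.pos_of_ne_zero hk) ?_
  rw [← zpow_natCast, ← zpow_mul, mul_comm, zpow_mul, zpow_natCast, hw i, one_zpow]
  exact isIntegral_one

end Laurent

theorem pow_index_eq_one_of_prod_zpow_eq_one {d : ℕ} {M : Type*} [DivisionCommMonoid M]
    {Γ : AddSubgroup (Fin d → ℤ)} {w : Fin d → M} (hw : ∀ m ∈ Γ, ∏ i, w i ^ m i = 1)
    (i : Fin d) : w i ^ Γ.index = 1 := by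
  have h := hw _ (AddSubgroup.nsmul_index_mem Γ (Pi.single i 1))
  rwa [Finset.prod_eq_single i (fun j _ hj => by simp [hj]) (by simp), Pi.smul_apply,
    Pi.single_eq_same, nsmul_one, zpow_natCast] at h

section OmegaGamma

variable {d : ℕ} {Γ : AddSubgroup (Fin d → ℤ)}

theorem omegaGamma_finite (Γ : AddSubgroup (Fin d → ℤ)) [Γ.FiniteIndex] :
    (omegaGamma Γ).Finite := by
  have hk := Nat.pos_of_ne_zero (AddSubgroup.FiniteIndex.index_ne_zero (H := Γ))
  refine (Set.Finite.pi fun _ =>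
    (Polynomial.nthRoots Γ.index (1 : ℂ)).toFinset.finite_toSet).subset fun ω hω i _ => ?_
  simpa [Polynomial.mem_nthRoots hk] using pow_index_eq_one_of_prod_zpow_eq_one hω.2 i

noncomputable abbrev coordField (ω : Fin d → ℂ) : IntermediateField ℚ ℂ :=
  IntermediateField.adjoin ℚ (Set.range ω)

noncomputable def coordGen (ω : Fin d → ℂ) (i : Fin d) : coordField ω :=
  ⟨ω i, IntermediateField.subset_adjoin ℚ _ (Set.mem_range_self i)⟩

variable {ω : Fin d → ℂ}

theorem coordGen_pow_index (hω : ω ∈ omegaGamma Γ) (i : Fin d) : coordGen ω i ^ Γ.index = 1 :=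
  Subtype.ext (pow_index_eq_one_of_prod_zpow_eq_one hω.2 i)

theorem finiteDimensional_coordField [Γ.FiniteIndex] (hω : ω ∈ omegaGamma Γ) :
    FiniteDimensional ℚ (coordField ω) := by
  have : Finite (Set.range ω) := Set.finite_range ω |>.to_subtype
  refine IntermediateField.finiteDimensional_adjoin fun _ ⟨i, hi⟩ => hi ▸ ?_
  exact IsIntegral.of_pow (Nat.pos_of_ne_zero (AddSubgroup.FiniteIndex.index_ne_zero (H := Γ)))
    ((pow_index_eq_one_of_prod_zpow_eq_one hω.2 i).symm ▸ isIntegral_one)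

theorem algHom_comp_coordGen_mem_omegaGamma [Γ.FiniteIndex] (hω : ω ∈ omegaGamma Γ)
    (σ : coordField ω →ₐ[ℚ] ℂ) :
    (fun i => σ (coordGen ω i)) ∈ omegaGamma Γ := by
  refine ⟨fun i => Complex.norm_eq_one_of_pow_eq_one ?_
    (AddSubgroup.FiniteIndex.index_ne_zero (H := Γ)), fun m hm => ?_⟩
  · rw [← map_pow, coordGen_pow_index hω, map_one]
  · have hprod : ∏ i, coordGen ω i ^ m i = 1 :=
      (algebraMap (coordField ω) ℂ).injective <| by
        simpa [cPow, coordGen, map_prod, map_zpow₀] using hω.2 m hm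
    simp only [cPow, ← map_zpow₀, ← map_prod, hprod, map_one]

theorem card_algHom_coordField_le [Γ.FiniteIndex] [FiniteDimensional ℚ (coordField ω)]
    (hω : ω ∈ omegaGamma Γ) :
    Fintype.card (coordField ω →ₐ[ℚ] ℂ) ≤ (omegaGamma Γ).ncard := by
  have := (omegaGamma_finite Γ).to_subtype
  rw [← Nat.card_eq_fintype_card, ← Nat.card_coe_set_eq]
  refine Nat.card_le_card_of_injective
    (fun σ => ⟨_, algHom_comp_coordGen_mem_omegaGamma hω σ⟩) fun σ τ h => ?_
  refine IntermediateField.adjoin_algHom_ext ℚ fun x hx => ?_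
  obtain ⟨i, rfl⟩ := hx
  exact congr_fun (congr_arg Subtype.val h) i

end OmegaGamma

theorem one_le_norm_lEval_mul_pow {d : ℕ} (f : LP d) {Γ : AddSubgroup (Fin d → ℤ)}
    [Γ.FiniteIndex] {ω : Fin d → ℂ} (hω : ω ∈ omegaGamma Γ) (hne : lEval f ω ≠ 0) :
    1 ≤ ‖lEval f ω‖ * l1Norm f ^ ((omegaGamma Γ).ncard - 1) := by
  have := finiteDimensional_coordField hω
  set x := laurentEval f (coordGen ω)
  have hx : (coordField ω).val x = lEval f ω := map_laurentEval (algebraMap _ ℂ) f _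
  have hf : f ≠ 0 := by rintro rfl; simp [lEval_eq_sum] at hne
  have hx0 : x ≠ 0 := by rintro h; simp [← hx, h] at hne
  have hconj (σ : coordField ω →ₐ[ℚ] ℂ) : ‖σ x‖ ≤ l1Norm f := by
    rw [← AlgHom.coe_toRingHom, map_laurentEval]
    exact norm_lEval_le_l1Norm f (algHom_comp_coordGen_mem_omegaGamma hω σ).1
  rw [← hx]
  exact one_le_norm_mul_pow_of_norm_algHom_le
    (isIntegral_laurentEval f AddSubgroup.FiniteIndex.index_ne_zero (coordGen_pow_index hω))
    hx0 (coordField ω).val (one_le_l1Norm hf) hconj (card_algHom_coordField_le hω)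

theorem one_le_euclid_mul_pow {d : ℕ} (f : LP d) {Γ : AddSubgroup (Fin d → ℤ)}
    [Γ.FiniteIndex] {ω : Fin d → ℂ} (hω : ω ∈ omegaGamma Γ) (hne : lEval f ω ≠ 0)
    {s : Fin d → ℂ} (hs : s ∈ uVar f) :
    1 ≤ euclid ω s * ((l1Norm f + 1) * (lipConst f + 1)) ^ (omegaGamma Γ).ncard := by
  set N := (omegaGamma Γ).ncard
  have hN : 1 ≤ N := (Set.ncard_pos (omegaGamma_finite Γ)).mpr ⟨ω, hω⟩
  have hB := l1Norm_nonneg f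
  have hC := lipConst_nonneg f
  have hlip : ‖lEval f ω‖ ≤ lipConst f * euclid ω s := by
    simpa [hs.2] using norm_lEval_sub_lEval_le f hω.1 hs.1
  have he : 0 ≤ euclid ω s := Real.sqrt_nonneg _
  calc (1 : ℝ) ≤ ‖lEval f ω‖ * l1Norm f ^ (N - 1) := one_le_norm_lEval_mul_pow f hω hne
    _ ≤ (euclid ω s * (lipConst f + 1)) * (l1Norm f + 1) ^ N := by
        gcongr ?_ * ?_
        · nlinarith
        · exact (pow_le_pow_left₀ hB (by linarith) _).trans
            (pow_le_pow_right₀ (by linarith) (by omega))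
    _ ≤ euclid ω s * ((lipConst f + 1) ^ N * (l1Norm f + 1) ^ N) := by
        rw [mul_assoc]
        gcongr
        exact le_self_pow₀ (by linarith) (by omega)
    _ = euclid ω s * ((l1Norm f + 1) * (lipConst f + 1)) ^ N := by rw [mul_pow, mul_comm (_ ^ N)]

theorem weak_diophantine_bound_general {d : ℕ} (f : LP d) (ε : ℝ) (hε : 0 < ε)
    (ψ : ℕ → ℕ) (hψ : Filter.Tendsto ψ Filter.atTop Filter.atTop) :
    ∃ L : ℕ, 1 ≤ L ∧ ∀ Γ : AddSubgroup (Fin d → ℤ), Γ.FiniteIndex → L < gammaMin Γ →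
      ∀ ω ∈ omegaGamma Γ, lEval f ω ≠ 0 → ∀ s ∈ uVar f,
        Real.exp (-(ε * (ψ (gammaMin Γ) : ℝ) * ((omegaGamma Γ).ncard : ℝ))) ≤
          euclid ω s := by
  set M := (l1Norm f + 1) * (lipConst f + 1)
  have hM : 0 < M := by have := l1Norm_nonneg f; have := lipConst_nonneg f; positivity
  obtain ⟨K, hK⟩ := exists_nat_ge (Real.log M / ε)
  obtain ⟨L₀, hL₀⟩ := Filter.eventually_atTop.mp (hψ.eventually_ge_atTop K)
  refine ⟨L₀ + 1, by omega, fun Γ hΓ hL ω hω hne s hs => ?_⟩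
  have hlogM : Real.log M ≤ ε * ψ (gammaMin Γ) := by
    rw [div_le_iff₀' hε] at hK
    exact hK.trans (by gcongr; exact_mod_cast hL₀ _ (by omega))
  have hMpow : M ^ (omegaGamma Γ).ncard ≤
      Real.exp (ε * ψ (gammaMin Γ) * (omegaGamma Γ).ncard) := by
    rw [← Real.exp_log hM, ← Real.exp_nat_mul, mul_comm]
    gcongr
  rw [Real.exp_neg, inv_le_iff_one_le_mul₀' (Real.exp_pos _), mul_comm]
  calc 1 ≤ euclid ω s * M ^ (omegaGamma Γ).ncard := one_le_euclid_mul_pow f hω hne hs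
    _ ≤ euclid ω s * Real.exp (ε * ψ (gammaMin Γ) * (omegaGamma Γ).ncard) := by
        gcongr; exact Real.sqrt_nonneg _

/-- For a nonzero irreducible `f` (any `d ≥ 1`), every `ε > 0` and every
`ψ : ℕ → ℕ` tending to infinity, eventually every `ω ∈ Ω_Γ` with `f(ω) ≠ 0` satisfies
`dist(ω, U(f)) ≥ e^{-ε ψ(⟨Γ⟩) |Ω_Γ|}`. -/
theorem weak_diophantine_bound {d : ℕ} (hd : 1 ≤ d) (f : LP d) (hf : f ≠ 0)
    (hirr : Irreducible f) (ε : ℝ) (hε : 0 < ε)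
    (ψ : ℕ → ℕ) (hψ : Filter.Tendsto ψ Filter.atTop Filter.atTop) :
    ∃ L : ℕ, 1 ≤ L ∧ ∀ Γ : AddSubgroup (Fin d → ℤ), Γ.FiniteIndex → L < gammaMin Γ →
      ∀ ω ∈ omegaGamma Γ, lEval f ω ≠ 0 → ∀ s ∈ uVar f,
        Real.exp (-(ε * (ψ (gammaMin Γ) : ℝ) * ((omegaGamma Γ).ncard : ℝ))) ≤
          euclid ω s :=
  weak_diophantine_bound_general f ε hε ψ hψ
end

section
/- Let γ be a complex number with |γ| = 1 that is algebraic over ℚ and is not a root of unity. Then for every function ψ: ℕ → ℕ with ψ(n) → ∞ as n → ∞ and every ε > 0, there exists n₀ such that for every n ≥ n₀ and every n-th root of unity ω ∈ ℂ one has |γ − ω| ≥ e^{−ε ψ(n) n}. -/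
/-! If `γ` is algebraic, pick `c ≠ 0` in `ℤ` with `c γ` integral. Whenever `γ ^ n ≠ 1`, the number
`c ^ n (γ ^ n - 1)` is a nonzero algebraic integer, so its norm is a nonzero integer; bounding the
other conjugates by the house gives the Liouville-type bound `1 ≤ B ^ n |γ ^ n - 1|`. For
`|γ| = |ω| = 1` we have `|γ ^ n - ω ^ n| ≤ n |γ - ω|`, so every `n`-th root of unity satisfies
`|γ - ω| ≥ (2B) ^ (-n)`, which eventually beats `e ^ (-ε ψ(n) n)` because `ψ(n) → ∞`. -/

open scoped BigOperators ENNReal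

theorem norm_pow_sub_pow_le_nat_mul {R : Type*} [NormedCommRing R] [NormOneClass R] {x y : R}
    (hx : ‖x‖ ≤ 1) (hy : ‖y‖ ≤ 1) (n : ℕ) : ‖x ^ n - y ^ n‖ ≤ n * ‖x - y‖ := by
  have hpow {z : R} (hz : ‖z‖ ≤ 1) (k : ℕ) : ‖z ^ k‖ ≤ 1 :=
    (norm_pow_le _ _).trans (pow_le_one₀ (norm_nonneg _) hz)
  rw [← geom_sum₂_mul]
  refine (norm_mul_le _ _).trans (mul_le_mul_of_nonneg_right ?_ (norm_nonneg _))
  calc _ ≤ ∑ i ∈ Finset.range n, ‖x ^ i * y ^ (n - 1 - i)‖ := norm_sum_le _ _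
    _ ≤ ∑ i ∈ Finset.range n, 1 := Finset.sum_le_sum fun i _ =>
        (norm_mul_le _ _).trans (mul_le_one₀ (hpow hx i) (norm_nonneg _) (hpow hy _))
    _ = n := by simp

namespace NumberField

variable {K : Type*} [Field K] [NumberField K]

theorem one_le_norm_mul_house_pow {α : K} (hα : IsIntegral ℤ α) (hα0 : α ≠ 0) (σ : K →+* ℂ) :
    1 ≤ ‖σ α‖ * house α ^ (Module.finrank ℚ K - 1) := by
  refine le_trans ?_ (norm_norm_le_norm_mul_house_pow α σ)
  obtain ⟨z, hz⟩ := IsIntegrallyClosed.isIntegral_iff.mp (Algebra.isIntegral_norm ℚ hα)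
  have hz0 : z ≠ 0 := by
    rintro rfl
    exact Algebra.norm_ne_zero_iff.mpr hα0 (by rw [← hz, map_zero])
  rw [← hz]
  simpa [Int.norm_eq_abs] using (by exact_mod_cast Int.one_le_abs hz0 : (1 : ℝ) ≤ |(z : ℝ)|)

theorem exists_one_le_pow_mul_norm_pow_sub_one (g : K) (σ : K →+* ℂ) :
    ∃ B : ℝ, 0 < B ∧ ∀ n : ℕ, σ g ^ n ≠ 1 → 1 ≤ B ^ n * ‖σ g ^ n - 1‖ := by
  obtain ⟨c, hc0, hx⟩ := ((IsFractionRing.isAlgebraic_iff ℤ ℚ K).mpr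
    (Algebra.IsAlgebraic.isAlgebraic g)).exists_integral_multiple
  set x := c • g
  set D := Module.finrank ℚ K - 1
  set H := house x + |(c : ℝ)|
  have hc1 : (1 : ℝ) ≤ |(c : ℝ)| := by exact_mod_cast Int.one_le_abs hc0
  have hH : 0 < H := add_pos_of_nonneg_of_pos (house_nonneg x) (by linarith)
  refine ⟨|(c : ℝ)| * H ^ D, mul_pos (by linarith) (pow_pos hH D), fun n hn => ?_⟩
  have hn0 : n ≠ 0 := by rintro rfl; exact hn (pow_zero _)
  -- `y = (c g) ^ n - c ^ n`, with the constant kept as an integer cast for `house_intCast`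
  set y : K := x ^ n + ((-c ^ n : ℤ) : K)
  have hσy : σ y = (c : ℂ) ^ n * (σ g ^ n - 1) := by
    simp only [y, x, zsmul_eq_mul]
    push_cast
    simp only [map_add, map_pow, map_mul, map_neg, map_intCast]
    ring
  have hy_int : IsIntegral ℤ y := (hx.pow n).add isIntegral_algebraMap
  have hy0 : y ≠ 0 := by
    rintro hy
    rw [hy, map_zero] at hσy
    exact mul_ne_zero (pow_ne_zero n (Int.cast_ne_zero.mpr hc0)) (sub_ne_zero.mpr hn) hσy.symm
  have hhouse : house y ≤ H ^ n := calc
    house y ≤ house x ^ n + |(c : ℝ)| ^ n := by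
      refine (house_add_le _ _).trans (add_le_add (house_pow_le x n) ?_)
      rw [house_intCast]
      push_cast
      rw [abs_neg, abs_pow]
    _ ≤ H ^ n := pow_add_pow_le (house_nonneg x) (abs_nonneg _) hn0
  calc 1 ≤ ‖σ y‖ * house y ^ D := one_le_norm_mul_house_pow hy_int hy0 σ
    _ ≤ (|(c : ℝ)| ^ n * ‖σ g ^ n - 1‖) * (H ^ n) ^ D := by
      rw [hσy, norm_mul, norm_pow, Complex.norm_intCast]
      gcongr
      exact house_nonneg y
    _ = (|(c : ℝ)| * H ^ D) ^ n * ‖σ g ^ n - 1‖ := by ring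

end NumberField

open IntermediateField in
theorem exists_one_le_pow_mul_norm_pow_sub_one_of_isAlgebraic {γ : ℂ} (h : IsAlgebraic ℚ γ) :
    ∃ B : ℝ, 0 < B ∧ ∀ n : ℕ, γ ^ n ≠ 1 → 1 ≤ B ^ n * ‖γ ^ n - 1‖ := by
  have : NumberField ℚ⟮γ⟯ := { to_finiteDimensional := adjoin.finiteDimensional h.isIntegral }
  simpa using NumberField.exists_one_le_pow_mul_norm_pow_sub_one (AdjoinSimple.gen ℚ γ)
    (ℚ⟮γ⟯.val : ℚ⟮γ⟯ →+* ℂ)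

theorem exists_exp_neg_mul_le_norm_sub_of_pow_eq_one {γ : ℂ} (hγ : ‖γ‖ ≤ 1)
    (halg : IsAlgebraic ℚ γ) (hru : ∀ k : ℕ, 0 < k → γ ^ k ≠ 1) :
    ∃ C : ℝ, ∀ n : ℕ, 0 < n → ∀ ω : ℂ, ω ^ n = 1 → Real.exp (-(C * n)) ≤ ‖γ - ω‖ := by
  obtain ⟨B, hB, hlower⟩ := exists_one_le_pow_mul_norm_pow_sub_one_of_isAlgebraic halg
  refine ⟨Real.log (2 * B), fun n hn ω hωn => ?_⟩
  have hω : ‖ω‖ = 1 := Complex.norm_eq_one_of_pow_eq_one hωn hn.ne'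
  have h2n : (n : ℝ) ≤ 2 ^ n := by exact_mod_cast n.lt_two_pow_self.le
  have key : 1 ≤ (2 * B) ^ n * ‖γ - ω‖ := calc
    1 ≤ B ^ n * ‖γ ^ n - ω ^ n‖ := by rw [hωn]; exact hlower n (hru n hn)
    _ ≤ B ^ n * (n * ‖γ - ω‖) := by
      gcongr; exact norm_pow_sub_pow_le_nat_mul hγ hω.le n
    _ ≤ B ^ n * (2 ^ n * ‖γ - ω‖) := by gcongr
    _ = (2 * B) ^ n * ‖γ - ω‖ := by ring
  rw [Real.exp_neg, mul_comm, Real.exp_nat_mul, Real.exp_log (by positivity)]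
  exact (inv_le_iff_one_le_mul₀' (by positivity)).mpr key

/-- Weak Gelfond bound: if `γ ∈ 𝕊` is algebraic and not a root of unity,
then for `ψ → ∞` and `ε > 0`, eventually every `n`-th root of unity `ω` satisfies
`|γ - ω| ≥ e^{-ε ψ(n) n}`. -/
theorem weak_gelfond (γ : ℂ) (hγ : ‖γ‖ = 1) (halg : IsAlgebraic ℚ γ)
    (hru : ∀ k : ℕ, 0 < k → γ ^ k ≠ 1)
    (ψ : ℕ → ℕ) (hψ : Filter.Tendsto ψ Filter.atTop Filter.atTop) (ε : ℝ) (hε : 0 < ε) :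
    ∃ n₀ : ℕ, ∀ n ≥ n₀, ∀ ω : ℂ, ω ^ n = 1 →
      Real.exp (-(ε * (ψ n : ℝ) * (n : ℝ))) ≤ ‖γ - ω‖ := by
  obtain ⟨C, hC⟩ := exists_exp_neg_mul_le_norm_sub_of_pow_eq_one hγ.le halg hru
  have hCψ : ∀ᶠ n in Filter.atTop, C ≤ ε * ψ n :=
    ((tendsto_natCast_atTop_atTop.comp hψ).const_mul_atTop hε).eventually_ge_atTop C
  obtain ⟨n₀, hn₀⟩ := (hCψ.and (Filter.eventually_gt_atTop 0)).exists_forall_of_atTop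
  refine ⟨n₀, fun n hn ω hω => ?_⟩
  obtain ⟨hCn, hn0⟩ := hn₀ n hn
  calc Real.exp (-(ε * ψ n * n)) ≤ Real.exp (-(C * n)) := by gcongr
    _ ≤ ‖γ - ω‖ := hC n hn0 ω hω
end
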